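/- Let S be a pseudo-regular subspace of a Krein space (H,J), and let Q ∈ L(H) be a J-normal projection with R(Q) = S. Set F = (I − Q)(I − Q)^#. Then S^{[⊥]} = R(F) [∔] S°, where S° is the isotropic part of S; in particular S^{[⊥]} is pseudo-regular. -/

import Mathlib

/-!
`J`-normality makes `Q` and `Q^#` commuting idempotents, so `F = (1 - Q)(1 - Q^#)` is a
`J`-selfadjoint idempotent; hence `R(F)` is regular with `R(F)^{[⊥]} = N(F)`. As
`S^{[⊥]} = N(Q^#)`, every `f ∈ S^{[⊥]}` splits as `f = F f + Q f` with `Q f ∈ S°`, while `Q F = 0`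
gives `R(F) ∩ S = 0`. Finally `S^{[⊥][⊥]} = N(1 - Q) = S`, so the isotropic part of `S^{[⊥]}`
is again `S°`.
-/

open ContinuousLinearMap

variable {H : Type*} [NormedAddCommGroup H] [InnerProductSpace ℂ H] [CompleteSpace H]

/-- The `J`-adjoint `T^# = J T* J`. -/
noncomputable def sharp (J T : H →L[ℂ] H) : H →L[ℂ] H :=
  J ∘L (ContinuousLinearMap.adjoint T) ∘L J

/-- The `J`-orthogonal companion `S^{[⊥]} = {f : [g,f] = 0 ∀ g ∈ S}` where `[g,f] = ⟪J g, f⟫`. -/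
def jperp (J : H →L[ℂ] H) (S : Submodule ℂ H) : Submodule ℂ H where
  carrier := {f | ∀ g ∈ S, (inner ℂ (J g) f : ℂ) = 0}
  add_mem' := by
    intro a b ha hb g hg
    rw [inner_add_right, ha g hg, hb g hg, add_zero]
  zero_mem' := by
    intro g hg
    simp
  smul_mem' := by
    intro c a ha g hg
    rw [inner_smul_right, ha g hg, mul_zero]

/-- A (closed) subspace `M` is regular if `M [∔] M^{[⊥]} = H`. -/
def KreinRegular (J : H →L[ℂ] H) (M : Submodule ℂ H) : Prop :=
  IsClosed (M : Set H) ∧ M ⊔ jperp J M = ⊤ ∧ M ⊓ jperp J M = ⊥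

/-- A closed subspace `S` is pseudo-regular if `S = M [∔] S°` for some regular subspace `M`,
where `S° = S ⊓ S^{[⊥]}` is the isotropic part. -/
def KreinPseudoRegular (J : H →L[ℂ] H) (S : Submodule ℂ H) : Prop :=
  IsClosed (S : Set H) ∧ ∃ M : Submodule ℂ H, KreinRegular J M ∧
    M ⊔ (S ⊓ jperp J S) = S ∧ M ⊓ (S ⊓ jperp J S) = ⊥

lemma involutive_of_comp_self_eq_one {R M : Type*} [Semiring R] [TopologicalSpace M]
    [AddCommMonoid M] [Module R M] {J : M →L[R] M} (hJ2 : J ∘L J = 1) : Function.Involutive J :=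
  fun x => by simpa using DFunLike.congr_fun hJ2 x

section Sharp

variable {J : H →L[ℂ] H}

lemma sharp_sub (A B : H →L[ℂ] H) : sharp J (A - B) = sharp J A - sharp J B := by
  simp only [sharp, map_sub, sub_comp, comp_sub]

lemma sharp_one (hJ2 : J ∘L J = 1) : sharp J 1 = 1 := by
  rw [sharp, adjoint_one, one_def, id_comp, ← one_def, hJ2]

lemma sharp_mul (hJ2 : J ∘L J = 1) (A B : H →L[ℂ] H) :
    sharp J (A * B) = sharp J B * sharp J A := by
  ext x
  simp [sharp, mul_def, adjoint_comp, involutive_of_comp_self_eq_one hJ2 _]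

lemma sharp_sharp (hJsa : adjoint J = J) (hJ2 : J ∘L J = 1) (T : H →L[ℂ] H) :
    sharp J (sharp J T) = T := by
  ext x
  simp [sharp, adjoint_comp, hJsa, involutive_of_comp_self_eq_one hJ2 _]

lemma sharp_mul_sharp_self (hJsa : adjoint J = J) (hJ2 : J ∘L J = 1) (T : H →L[ℂ] H) :
    sharp J (T * sharp J T) = T * sharp J T := by
  rw [sharp_mul hJ2, sharp_sharp hJsa hJ2]

lemma sharp_inner_right (hJsa : adjoint J = J) (hJ2 : J ∘L J = 1) (T : H →L[ℂ] H) (x y : H) :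
    inner ℂ (J x) (sharp J T y) = inner ℂ (J (T x)) y := by
  calc inner ℂ (J x) (sharp J T y)
      = inner ℂ (J (J x)) (adjoint T (J y)) := by
        rw [sharp, comp_apply, comp_apply, ← adjoint_inner_left, hJsa]
    _ = inner ℂ (J (T x)) y := by
        rw [involutive_of_comp_self_eq_one hJ2, adjoint_inner_right, ← adjoint_inner_left, hJsa]

lemma jperp_range (hJsa : adjoint J = J) (hJ2 : J ∘L J = 1) (T : H →L[ℂ] H) :
    jperp J (LinearMap.range (T : H →ₗ[ℂ] H)) = LinearMap.ker (sharp J T : H →ₗ[ℂ] H) := by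
  ext f
  change (∀ g ∈ LinearMap.range (T : H →ₗ[ℂ] H), inner ℂ (J g) f = 0) ↔ sharp J T f = 0
  simp only [LinearMap.mem_range, coe_coe, forall_exists_index, forall_apply_eq_imp_iff,
    ← sharp_inner_right hJsa hJ2]
  constructor
  · intro h
    simpa [involutive_of_comp_self_eq_one hJ2 _] using h (J (sharp J T f))
  · intro h x
    rw [h, inner_zero_right]

lemma isIdempotentElem_sharp (hJ2 : J ∘L J = 1) {Q : H →L[ℂ] H} (hQ : IsIdempotentElem Q) :
    IsIdempotentElem (sharp J Q) := by
  rw [IsIdempotentElem, ← sharp_mul hJ2, hQ.eq]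

lemma jperp_jperp_range (hJsa : adjoint J = J) (hJ2 : J ∘L J = 1) {Q : H →L[ℂ] H}
    (hQ : IsIdempotentElem Q) :
    jperp J (jperp J (LinearMap.range (Q : H →ₗ[ℂ] H))) = LinearMap.range (Q : H →ₗ[ℂ] H) := by
  rw [jperp_range hJsa hJ2,
    LinearMap.IsIdempotentElem.ker_eq_range_one_sub (isIdempotentElem_sharp hJ2 hQ).toLinearMap,
    ← toLinearMap_one, ← toLinearMap_sub, jperp_range hJsa hJ2, sharp_sub, sharp_one hJ2,
    sharp_sharp hJsa hJ2, toLinearMap_sub, toLinearMap_one,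
    LinearMap.IsIdempotentElem.range_eq_ker_one_sub hQ.toLinearMap]

lemma kreinRegular_range_of_sharp_eq_self (hJsa : adjoint J = J) (hJ2 : J ∘L J = 1)
    {E : H →L[ℂ] H} (hE : IsIdempotentElem E) (hEs : sharp J E = E) :
    KreinRegular J (LinearMap.range (E : H →ₗ[ℂ] H)) := by
  have hcompl := LinearMap.IsIdempotentElem.isCompl hE.toLinearMap
  rw [KreinRegular, jperp_range hJsa hJ2, hEs]
  exact ⟨ContinuousLinearMap.IsIdempotentElem.isClosed_range hE, hcompl.sup_eq_top,
    hcompl.inf_eq_bot⟩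

end Sharp

section ModuleEnd

open LinearMap

variable {R M : Type*} [Ring R] [AddCommGroup M] [Module R M] {p q : Module.End R M}

lemma range_one_sub_mul_one_sub_sup_inf_ker (hq : IsIdempotentElem q) (hpq : Commute p q) :
    range ((1 - p) * (1 - q)) ⊔ (range p ⊓ ker q) = ker q := by
  refine le_antisymm (sup_le ?_ inf_le_right) fun f hf => ?_
  · rintro _ ⟨x, rfl⟩
    have hq0 : q * ((1 - p) * (1 - q)) = 0 :=
      calc q * ((1 - p) * (1 - q))
          = (q - q * p) * (1 - q) := by noncomm_ring
        _ = (1 - p) * (q - q * q) := by rw [← hpq.eq]; noncomm_ring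
        _ = 0 := by rw [hq.eq, sub_self, mul_zero]
    change q (((1 - p) * (1 - q)) x) = 0
    rw [← Module.End.mul_apply, hq0, LinearMap.zero_apply]
  · have hqf : q f = 0 := hf
    have hsplit : f = ((1 - p) * (1 - q)) f + p f := by
      simp [hqf]
    rw [hsplit]
    refine Submodule.add_mem_sup ⟨f, rfl⟩ ⟨⟨f, rfl⟩, ?_⟩
    change q (p f) = 0
    rw [← Module.End.mul_apply, ← hpq.eq, Module.End.mul_apply, hqf, map_zero]

lemma disjoint_range_one_sub_mul_range (hp : IsIdempotentElem p) (r : Module.End R M) :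
    Disjoint (range ((1 - p) * r)) (range p) := by
  refine Disjoint.mono_left ?_ (LinearMap.IsIdempotentElem.isCompl hp).symm.disjoint
  rw [LinearMap.IsIdempotentElem.ker_eq_range_one_sub hp, Module.End.mul_eq_comp]
  exact range_comp_le_range _ _

lemma range_inf_ker_le_ker_one_sub_mul_one_sub (hp : IsIdempotentElem p) :
    range p ⊓ ker q ≤ ker ((1 - p) * (1 - q)) := by
  rintro f ⟨hfp, hfq⟩
  have hpf : p f = f := (LinearMap.IsIdempotentElem.mem_range_iff hp).1 hfp
  have hqf : q f = 0 := hfq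
  simp [hpf, hqf]

end ModuleEnd

section JNormalProjection

variable {J Q : H →L[ℂ] H}

lemma toLinearMap_one_sub_mul_sharp_one_sub (hJ2 : J ∘L J = 1) :
    (((1 - Q) * sharp J (1 - Q) : H →L[ℂ] H) : H →ₗ[ℂ] H) =
      (1 - Q : H →ₗ[ℂ] H) * (1 - sharp J Q : H →ₗ[ℂ] H) := by
  rw [sharp_sub, sharp_one hJ2, toLinearMap_mul, toLinearMap_sub, toLinearMap_one,
    toLinearMap_sub, toLinearMap_one]

lemma isIdempotentElem_one_sub_mul_sharp_one_sub (hJ2 : J ∘L J = 1) (hQ : IsIdempotentElem Q)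
    (hQn : Commute Q (sharp J Q)) : IsIdempotentElem ((1 - Q) * sharp J (1 - Q)) := by
  rw [sharp_sub, sharp_one hJ2]
  exact IsIdempotentElem.mul_of_commute
    ((Commute.one_right _).sub_right ((Commute.one_left _).sub_left hQn))
    hQ.one_sub (isIdempotentElem_sharp hJ2 hQ).one_sub

lemma range_one_sub_mul_sharp_one_sub_sup_inf_jperp (hJsa : adjoint J = J) (hJ2 : J ∘L J = 1)
    (hQ : IsIdempotentElem Q) (hQn : Commute Q (sharp J Q)) :
    LinearMap.range (((1 - Q) * sharp J (1 - Q) : H →L[ℂ] H) : H →ₗ[ℂ] H) ⊔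
        (LinearMap.range (Q : H →ₗ[ℂ] H) ⊓ jperp J (LinearMap.range (Q : H →ₗ[ℂ] H))) =
      jperp J (LinearMap.range (Q : H →ₗ[ℂ] H)) := by
  rw [jperp_range hJsa hJ2, toLinearMap_one_sub_mul_sharp_one_sub hJ2]
  exact range_one_sub_mul_one_sub_sup_inf_ker (isIdempotentElem_sharp hJ2 hQ).toLinearMap
    (hQn.map toLinearMapRingHom)

lemma disjoint_range_one_sub_mul_sharp_one_sub_range (hJ2 : J ∘L J = 1)
    (hQ : IsIdempotentElem Q) :
    Disjoint (LinearMap.range (((1 - Q) * sharp J (1 - Q) : H →L[ℂ] H) : H →ₗ[ℂ] H))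
      (LinearMap.range (Q : H →ₗ[ℂ] H)) := by
  rw [toLinearMap_one_sub_mul_sharp_one_sub hJ2]
  exact disjoint_range_one_sub_mul_range hQ.toLinearMap _

lemma range_inf_jperp_le_jperp_range_one_sub_mul_sharp_one_sub (hJsa : adjoint J = J)
    (hJ2 : J ∘L J = 1) (hQ : IsIdempotentElem Q) :
    LinearMap.range (Q : H →ₗ[ℂ] H) ⊓ jperp J (LinearMap.range (Q : H →ₗ[ℂ] H)) ≤
      jperp J (LinearMap.range (((1 - Q) * sharp J (1 - Q) : H →L[ℂ] H) : H →ₗ[ℂ] H)) := by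
  rw [jperp_range hJsa hJ2, jperp_range hJsa hJ2, sharp_mul_sharp_self hJsa hJ2,
    toLinearMap_one_sub_mul_sharp_one_sub hJ2]
  exact range_inf_ker_le_ker_one_sub_mul_one_sub hQ.toLinearMap

lemma kreinPseudoRegular_jperp_range (hJsa : adjoint J = J) (hJ2 : J ∘L J = 1)
    (hQ : IsIdempotentElem Q) (hQn : Commute Q (sharp J Q)) :
    KreinPseudoRegular J (jperp J (LinearMap.range (Q : H →ₗ[ℂ] H))) := by
  have hisotropic : jperp J (LinearMap.range (Q : H →ₗ[ℂ] H)) ⊓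
      jperp J (jperp J (LinearMap.range (Q : H →ₗ[ℂ] H))) =
      LinearMap.range (Q : H →ₗ[ℂ] H) ⊓ jperp J (LinearMap.range (Q : H →ₗ[ℂ] H)) := by
    rw [jperp_jperp_range hJsa hJ2 hQ, inf_comm]
  refine ⟨?_, _, kreinRegular_range_of_sharp_eq_self hJsa hJ2
    (isIdempotentElem_one_sub_mul_sharp_one_sub hJ2 hQ hQn) (sharp_mul_sharp_self hJsa hJ2 _),
    ?_, ?_⟩
  · rw [jperp_range hJsa hJ2]
    exact isClosed_ker _
  · rw [hisotropic, range_one_sub_mul_sharp_one_sub_sup_inf_jperp hJsa hJ2 hQ hQn]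
  · rw [hisotropic]
    exact ((disjoint_range_one_sub_mul_sharp_one_sub_range hJ2 hQ).mono_right inf_le_left).eq_bot

end JNormalProjection

/-- If `Q` is a `J`-normal projection with range `S` and `F = (I−Q)(I−Q)^#`, then
`S^{[⊥]} = R(F) [∔] S°`; in particular `S^{[⊥]}` is pseudo-regular. -/
theorem stmt11 (J Q : H →L[ℂ] H)
    (hJsa : ContinuousLinearMap.adjoint J = J) (hJ2 : J ∘L J = 1)
    (hQ : Q ∘L Q = Q) (hQn : Q ∘L sharp J Q = sharp J Q ∘L Q)
    (S : Submodule ℂ H) (hS : LinearMap.range (Q : H →ₗ[ℂ] H) = S)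
    (F : H →L[ℂ] H) (hF : F = (1 - Q) ∘L sharp J (1 - Q)) :
    LinearMap.range (F : H →ₗ[ℂ] H) ⊔ (S ⊓ jperp J S) = jperp J S ∧
    LinearMap.range (F : H →ₗ[ℂ] H) ⊓ (S ⊓ jperp J S) = ⊥ ∧
    (∀ f ∈ LinearMap.range (F : H →ₗ[ℂ] H), ∀ g ∈ S ⊓ jperp J S, (inner ℂ (J f) g : ℂ) = 0) ∧
    KreinPseudoRegular J (jperp J S) := by
  subst hS hF
  exact ⟨range_one_sub_mul_sharp_one_sub_sup_inf_jperp hJsa hJ2 hQ hQn,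
    ((disjoint_range_one_sub_mul_sharp_one_sub_range hJ2 hQ).mono_right inf_le_left).eq_bot,
    fun f hf g hg => range_inf_jperp_le_jperp_range_one_sub_mul_sharp_one_sub hJsa hJ2 hQ hg f hf,
    kreinPseudoRegular_jperp_range hJsa hJ2 hQ hQn⟩
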